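/- For every complex number z = λ + iθ with λ ∈ ℝ, θ ∈ ℝ, and |θ| < 2π ≤ kπ for an integer k ≥ 2, one has |1 + z²/(k²π²)| ≥ (1 + λ²/(k²π²))·(1 - θ²/(k²π²)). -/

import Mathlib

open Real

/-- Factor-wise inequality: for `k ≥ 2`, real `λ, θ` with `|θ| < 2π`,
`|1 + (λ+iθ)²/(k²π²)| ≥ (1 + λ²/(k²π²))(1 - θ²/(k²π²))`. -/
theorem factor_abs_ge (k : ℕ) (hk : 2 ≤ k) (l θ : ℝ) (hθ : |θ| < 2 * π) :
    (1 + l ^ 2 / ((k : ℝ) ^ 2 * π ^ 2)) * (1 - θ ^ 2 / ((k : ℝ) ^ 2 * π ^ 2)) ≤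
      ‖(1 + ((l : ℂ) + θ * Complex.I) ^ 2 / ((k : ℂ) ^ 2 * (π : ℂ) ^ 2))‖ := by
  have hπ := Real.pi_pos
  have hk' : (2:ℝ) ≤ (k:ℝ) := by exact_mod_cast hk
  have hA : 0 < (k:ℝ)^2 * π^2 := by positivity
  have hk2 : (4:ℝ) ≤ (k:ℝ)^2 := by nlinarith
  have hθ2 : θ^2 < (k:ℝ)^2 * π^2 := by
    have h1 : θ^2 < (2*π)^2 := by
      have := sq_abs θ
      nlinarith [abs_nonneg θ]
    nlinarith [mul_nonneg (sub_nonneg.mpr hk2) (sq_nonneg π)]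
  have hAc : ((k:ℂ)^2*(π:ℂ)^2) = ((( (k:ℝ)^2*π^2 : ℝ)) : ℂ) := by push_cast; ring
  have hsq : ((l:ℂ) + θ*Complex.I)^2 = ((l^2 - θ^2 : ℝ) : ℂ) + ((2*l*θ : ℝ) : ℂ) * Complex.I := by
    push_cast
    ring_nf
    rw [Complex.I_sq]
    ring
  have hre : ((1:ℂ) + ((l:ℂ) + θ*Complex.I)^2 / ((k:ℂ)^2*(π:ℂ)^2)).re
      = 1 + (l^2 - θ^2) / ((k:ℝ)^2*π^2) := by
    rw [hsq, hAc, Complex.add_re, Complex.div_ofReal_re]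
    simp only [Complex.one_re, Complex.add_re, Complex.ofReal_re, Complex.mul_re,
      Complex.I_re, Complex.I_im, Complex.ofReal_im]
    ring
  have him : ((1:ℂ) + ((l:ℂ) + θ*Complex.I)^2 / ((k:ℂ)^2*(π:ℂ)^2)).im
      = 2*l*θ / ((k:ℝ)^2*π^2) := by
    rw [hsq, hAc, Complex.add_im, Complex.div_ofReal_im]
    simp only [Complex.one_im, Complex.add_im, Complex.ofReal_im, Complex.mul_im,
      Complex.I_re, Complex.I_im, Complex.ofReal_re]
    ring
  have hRHS : 0 ≤ (1 + l ^ 2 / ((k : ℝ) ^ 2 * π ^ 2)) * (1 - θ ^ 2 / ((k : ℝ) ^ 2 * π ^ 2)) := by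
    have h3 : 0 ≤ 1 - θ ^ 2 / ((k : ℝ) ^ 2 * π ^ 2) := by
      rw [sub_nonneg, div_le_one hA]; exact hθ2.le
    have h2 : 0 ≤ 1 + l ^ 2 / ((k : ℝ) ^ 2 * π ^ 2) := by positivity
    exact mul_nonneg h2 h3
  rw [Complex.norm_def, Real.le_sqrt hRHS]
  rw [Complex.normSq_apply, hre, him]
  set A := (k:ℝ)^2*π^2 with hAdef
  have hApos : (0:ℝ) < A := hA
  have hab : 2*l*θ/A * (2*l*θ/A) = 4 * (l^2/A) * (θ^2/A) := by
    field_simp; ring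
  have hd : (l^2-θ^2)/A = l^2/A - θ^2/A := by ring
  rw [hab, hd]
  set a := l^2/A with hadef
  set b := θ^2/A with hbdef
  have ha : 0 ≤ a := by positivity
  have hb : 0 ≤ b := by positivity
  have hb1 : b ≤ 1 := by rw [hbdef, div_le_one hApos]; exact hθ2.le
  nlinarith [mul_nonneg ha hb, sq_nonneg (a-b), mul_nonneg (mul_nonneg ha hb) ha,
    mul_nonneg (mul_nonneg ha hb) (sub_nonneg.mpr hb1)]
  exact Complex.normSq_nonneg _
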